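/- arXiv:2402.05088 — 4 statements merged into one kernel-verified Lean document; each statement's English description precedes it below -/
import Mathlib

section
/- For every finite simple graph G without isolated vertices, γ(G) ≤ Δ(G) · ρ(G), where Δ(G) is the maximum degree of G. -/
open SimpleGraph Finset

/-- `X` is a dominating set of `G`: every vertex is in `X` or adjacent to a vertex of `X`. -/
def IsDominatingSet {V : Type*} (G : SimpleGraph V) (X : Finset V) : Prop :=
  ∀ v : V, v ∈ X ∨ ∃ u ∈ X, G.Adj u v

/-- The domination number of `G`. -/
noncomputable def domNum {V : Type*} (G : SimpleGraph V) : ℕ :=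
  sInf {n : ℕ | ∃ X : Finset V, IsDominatingSet G X ∧ X.card = n}

/-- `Y` is a packing of `G`: closed neighborhoods of distinct vertices of `Y` are disjoint
(equivalently, distinct vertices of `Y` are at distance at least 3). -/
def IsPackingSet {V : Type*} (G : SimpleGraph V) (Y : Finset V) : Prop :=
  ∀ u ∈ Y, ∀ v ∈ Y, u ≠ v →
    Disjoint (insert u (G.neighborSet u)) (insert v (G.neighborSet v))

/-- The packing number of `G`. -/
noncomputable def packNum {V : Type*} (G : SimpleGraph V) : ℕ :=
  sSup {n : ℕ | ∃ Y : Finset V, IsPackingSet G Y ∧ Y.card = n}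

/-!
A packing `Y` of maximum size cannot be extended, so the closed neighborhood of every vertex
outside `Y` meets that of some vertex of `Y`, i.e. every vertex is within distance two of `Y`.
Hence the union of the open neighborhoods of the vertices of `Y` dominates `G`; the vertices of
`Y` themselves are dominated because no vertex is isolated. This union has at most `Δ(G) · |Y|`
vertices.
-/

section

variable {V : Type*} {G : SimpleGraph V}

theorem IsPackingSet.insert [DecidableEq V] {Y : Finset V} (hY : IsPackingSet G Y) {v : V}
    (hv : ∀ y ∈ Y,
      Disjoint (Insert.insert v (G.neighborSet v)) (Insert.insert y (G.neighborSet y))) :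
    IsPackingSet G (Insert.insert v Y) := by
  intro a ha b hb hab
  rcases Finset.mem_insert.1 ha with rfl | haY <;> rcases Finset.mem_insert.1 hb with rfl | hbY
  · exact absurd rfl hab
  · exact hv b hbY
  · exact (hv a haY).symm
  · exact hY a haY b hbY hab

theorem bddAbove_setOf_isPackingSet_card [Fintype V] (G : SimpleGraph V) :
    BddAbove {n | ∃ Y : Finset V, IsPackingSet G Y ∧ Y.card = n} :=
  ⟨Fintype.card V, fun _ ⟨Y, _, hY⟩ => hY ▸ Y.card_le_univ⟩

theorem IsPackingSet.card_le_packNum [Fintype V] {Y : Finset V} (hY : IsPackingSet G Y) :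
    Y.card ≤ packNum G :=
  le_csSup (bddAbove_setOf_isPackingSet_card G) ⟨Y, hY, rfl⟩

theorem exists_isPackingSet_card_eq_packNum [Fintype V] (G : SimpleGraph V) :
    ∃ Y : Finset V, IsPackingSet G Y ∧ Y.card = packNum G :=
  Nat.sSup_mem (s := {n | ∃ Y : Finset V, IsPackingSet G Y ∧ Y.card = n})
    ⟨0, ∅, by simp [IsPackingSet], rfl⟩ (bddAbove_setOf_isPackingSet_card G)

theorem IsPackingSet.exists_not_disjoint_of_card_eq_packNum [Fintype V] [DecidableEq V]
    {Y : Finset V} (hY : IsPackingSet G Y) (hcard : Y.card = packNum G) {v : V} (hv : v ∉ Y) :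
    ∃ y ∈ Y,
      ¬Disjoint (Insert.insert v (G.neighborSet v)) (Insert.insert y (G.neighborSet y)) := by
  by_contra! hdisj
  have := (hY.insert hdisj).card_le_packNum
  rw [Finset.card_insert_of_notMem hv, hcard] at this
  omega

theorem isDominatingSet_biUnion_neighborFinset [DecidableEq V] [G.LocallyFinite] {Y : Finset V}
    (hiso : ∀ v : V, ∃ u : V, G.Adj v u)
    (hY : ∀ v ∉ Y, ∃ y ∈ Y,
      ¬Disjoint (Insert.insert v (G.neighborSet v)) (Insert.insert y (G.neighborSet y))) :
    IsDominatingSet G (Y.biUnion (G.neighborFinset ·)) := by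
  intro v
  by_cases hvY : v ∈ Y
  · obtain ⟨u, hvu⟩ := hiso v
    exact Or.inr
      ⟨u, Finset.mem_biUnion.2 ⟨v, hvY, (G.mem_neighborFinset v u).2 hvu⟩, hvu.symm⟩
  obtain ⟨y, hy, hmeet⟩ := hY v hvY
  obtain ⟨z, hzv, hzy⟩ := Set.not_disjoint_iff.1 hmeet
  rcases hzy with rfl | hyz
  · rcases hzv with rfl | hvz
    · exact absurd hy hvY
    · exact Or.inl (Finset.mem_biUnion.2 ⟨z, hy, (G.mem_neighborFinset z v).2 hvz.symm⟩)
  · have hzX : z ∈ Y.biUnion (G.neighborFinset ·) :=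
      Finset.mem_biUnion.2 ⟨y, hy, (G.mem_neighborFinset y z).2 hyz⟩
    rcases hzv with rfl | hvz
    · exact Or.inl hzX
    · exact Or.inr ⟨z, hzX, hvz.symm⟩

theorem domNum_le_card {X : Finset V} (hX : IsDominatingSet G X) : domNum G ≤ X.card :=
  Nat.sInf_le ⟨X, hX, rfl⟩

theorem card_biUnion_neighborFinset_le [Fintype V] [DecidableEq V] [DecidableRel G.Adj]
    (Y : Finset V) : (Y.biUnion (G.neighborFinset ·)).card ≤ Y.card * G.maxDegree :=
  calc (Y.biUnion (G.neighborFinset ·)).card ≤ ∑ y ∈ Y, G.degree y := Finset.card_biUnion_le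
    _ ≤ Y.card * G.maxDegree := by
      simpa using Finset.sum_le_card_nsmul Y _ _ fun y _ => G.degree_le_maxDegree y

end

theorem domination_le_maxDegree_mul_packing {V : Type*} [Fintype V] [DecidableEq V]
    (G : SimpleGraph V) [DecidableRel G.Adj] (hiso : ∀ v : V, ∃ u : V, G.Adj v u) :
    domNum G ≤ G.maxDegree * packNum G := by
  obtain ⟨Y, hY, hcard⟩ := exists_isPackingSet_card_eq_packNum G
  have hdom : IsDominatingSet G (Y.biUnion (G.neighborFinset ·)) :=
    isDominatingSet_biUnion_neighborFinset hiso
      fun _ hv => hY.exists_not_disjoint_of_card_eq_packNum hcard hv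
  calc domNum G ≤ (Y.biUnion (G.neighborFinset ·)).card := domNum_le_card hdom
    _ ≤ Y.card * G.maxDegree := card_biUnion_neighborFinset_le Y
    _ = G.maxDegree * packNum G := by rw [hcard, mul_comm]
end

section
/- For every connected finite simple graph G with maximum degree at most 2 (i.e., G is a path or a cycle), γ(G) ≤ ρ(G) + 1. -/
/-!
A connected graph of maximum degree at most two has a Hamiltonian path `v₀ ⋯ v_ℓ`: a longest
path cannot be extended at its ends, and an interior vertex already has both of its neighbours
on the path. The vertices `v₁, v₄, v₇, …` (together with `v_ℓ` when it is left over) dominate,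
so `γ ≤ ⌈(ℓ + 1) / 3⌉`. The vertices `v₀, v₃, …, v_{3k}` with `3k + 2 ≤ ℓ` form a packing,
because apart from path edges the only possible edge is `v₀v_ℓ`; so `ρ ≥ ⌊(ℓ + 1) / 3⌋`.
-/

open SimpleGraph Finset

namespace SimpleGraph

variable {V : Type*} {G : SimpleGraph V}

lemma eq_or_eq_of_adj_of_maxDegree_le_two [Fintype V] [DecidableRel G.Adj]
    (hdeg : G.maxDegree ≤ 2) {x a b c : V} (ha : G.Adj x a) (hb : G.Adj x b) (hab : a ≠ b)
    (hc : G.Adj x c) : c = a ∨ c = b := by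
  classical
  by_contra! h
  have hsub : ({a, b, c} : Finset V) ⊆ G.neighborFinset x := by
    simp [insert_subset_iff, ha, hb, hc]
  have hthree : ({a, b, c} : Finset V).card = 3 :=
    card_eq_three.mpr ⟨a, b, c, hab, h.1.symm, h.2.symm, rfl⟩
  have := (card_le_card hsub).trans
    ((G.card_neighborFinset_eq_degree x).le.trans (G.degree_le_maxDegree x))
  omega

namespace Walk

variable {a b : V} {p : G.Walk a b}

lemma IsPath.eq_getVert_pred_or_succ_of_adj [Fintype V] [DecidableRel G.Adj]
    (hdeg : G.maxDegree ≤ 2) (hp : p.IsPath) {i : ℕ} {v : V} (hi₀ : 0 < i) (hi : i < p.length)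
    (h : G.Adj (p.getVert i) v) : v = p.getVert (i - 1) ∨ v = p.getVert (i + 1) := by
  have hpred : G.Adj (p.getVert i) (p.getVert (i - 1)) := by
    simpa [Nat.sub_add_cancel hi₀] using (p.adj_getVert_succ (i := i - 1) (by omega)).symm
  refine eq_or_eq_of_adj_of_maxDegree_le_two hdeg hpred (p.adj_getVert_succ hi) ?_ h
  intro heq
  have := hp.getVert_injOn (show i - 1 ≤ p.length by omega) (show i + 1 ≤ p.length by omega) heq
  omega

lemma IsPath.exists_isPath_length_gt [Fintype V] [DecidableRel G.Adj] (hconn : G.Connected)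
    (hdeg : G.maxDegree ≤ 2) (hp : p.IsPath) {w : V} (hw : w ∉ p.support) :
    ∃ (c d : V) (q : G.Walk c d), q.IsPath ∧ p.length < q.length := by
  obtain ⟨r⟩ := hconn.preconnected a w
  obtain ⟨⟨⟨x, y⟩, hxy⟩, -, hx, hy⟩ :=
    r.exists_boundary_dart {v | v ∈ p.support} p.start_mem_support hw
  obtain ⟨i, rfl, hi⟩ := mem_support_iff_exists_getVert.mp hx
  rcases Nat.eq_zero_or_pos i with rfl | hi₀
  · rw [getVert_zero] at hxy
    exact ⟨y, b, cons hxy.symm p, hp.cons hy, by simp⟩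
  rcases hi.lt_or_eq with hi | rfl
  · rcases hp.eq_getVert_pred_or_succ_of_adj hdeg hi₀ hi hxy with rfl | rfl <;>
      exact absurd (p.getVert_mem_support _) hy
  · rw [getVert_length] at hxy
    exact ⟨a, y, p.concat hxy, hp.concat hy hxy, by simp⟩

end Walk

theorem Connected.exists_isHamiltonian_of_maxDegree_le_two [Fintype V] [DecidableEq V]
    [DecidableRel G.Adj] (hconn : G.Connected) (hdeg : G.maxDegree ≤ 2) :
    ∃ (a b : V) (p : G.Walk a b), p.IsHamiltonian := by
  by_contra! h
  have hlong : ∀ k, ∃ (a b : V) (p : G.Walk a b), p.IsPath ∧ k ≤ p.length := by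
    intro k
    induction k with
    | zero =>
      obtain ⟨v⟩ := hconn.nonempty
      exact ⟨v, v, .nil, .nil, le_rfl⟩
    | succ k ih =>
      obtain ⟨a, b, p, hp, hk⟩ := ih
      obtain ⟨w, hw⟩ : ∃ w, w ∉ p.support := by
        by_contra! hall
        exact h a b p (hp.isHamiltonian_of_mem hall)
      obtain ⟨c, d, q, hq, hlt⟩ := hp.exists_isPath_length_gt hconn hdeg hw
      exact ⟨c, d, q, hq, by omega⟩
  obtain ⟨a, b, p, hp, hk⟩ := hlong (Fintype.card V)
  exact absurd hp.length_lt (by omega)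

namespace Walk

variable [DecidableEq V] {a b : V} {p : G.Walk a b}

lemma IsHamiltonian.exists_getVert_of_adj [Fintype V] [DecidableRel G.Adj]
    (hdeg : G.maxDegree ≤ 2) (hp : p.IsHamiltonian) {i : ℕ} {v : V} (hi : i < p.length)
    (h : G.Adj (p.getVert i) v) :
    ∃ j ≤ p.length, p.getVert j = v ∧ (j + 1 = i ∨ j = i + 1 ∨ (i = 0 ∧ j = p.length)) := by
  obtain ⟨j, rfl, hj⟩ := mem_support_iff_exists_getVert.mp (hp.mem_support v)
  refine ⟨j, hj, rfl, ?_⟩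
  have hinj := hp.isPath.getVert_injOn
  have hij : i ≠ j := by rintro rfl; exact h.ne rfl
  by_cases hj_int : 0 < j ∧ j < p.length
  · rcases hp.isPath.eq_getVert_pred_or_succ_of_adj hdeg hj_int.1 hj_int.2 h.symm with e | e <;>
    · have := hinj (show i ≤ p.length by omega) (show _ ≤ p.length by omega) e
      omega
  by_cases hi₀ : 0 < i
  · rcases hp.isPath.eq_getVert_pred_or_succ_of_adj hdeg hi₀ hi h with e | e <;>
    · have := hinj (show j ≤ p.length from hj) (show _ ≤ p.length by omega) e
      omega
  omega

lemma IsHamiltonian.domNum_le (hp : p.IsHamiltonian) : domNum G ≤ (p.length + 3) / 3 := by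
  -- When `3 ∣ ℓ` the last index `ℓ + 1` overshoots, but `getVert` past the end returns `b = v_ℓ`.
  set D := (range ((p.length + 3) / 3)).image fun k ↦ p.getVert (3 * k + 1)
  have hD : IsDominatingSet G D := by
    intro v
    obtain ⟨j, rfl, hj⟩ := mem_support_iff_exists_getVert.mp (hp.mem_support v)
    have hmem : p.getVert (3 * (j / 3) + 1) ∈ D := mem_image_of_mem _ (mem_range.mpr (by omega))
    rcases (by omega : j % 3 = 1 ∨ j % 3 = 2 ∨ (j % 3 = 0 ∧ j < p.length) ∨
      (j % 3 = 0 ∧ j = p.length)) with hj' | hj' | ⟨hj', hlt⟩ | ⟨hj', rfl⟩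
    · rw [show 3 * (j / 3) + 1 = j by omega] at hmem
      exact .inl hmem
    · refine .inr ⟨_, hmem, ?_⟩
      simpa [show 3 * (j / 3) + 1 + 1 = j by omega] using p.adj_getVert_succ (i := 3 * (j / 3) + 1)
        (by omega)
    · rw [show 3 * (j / 3) + 1 = j + 1 by omega] at hmem
      exact .inr ⟨_, hmem, (p.adj_getVert_succ hlt).symm⟩
    · rw [p.getVert_of_length_le (by omega : p.length ≤ 3 * (p.length / 3) + 1)] at hmem
      rw [getVert_length]
      exact .inl hmem
  calc domNum G ≤ D.card := Nat.sInf_le ⟨D, hD, rfl⟩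
    _ ≤ (p.length + 3) / 3 := card_image_le.trans (card_range _).le

lemma IsHamiltonian.le_packNum [Fintype V] [DecidableRel G.Adj] (hdeg : G.maxDegree ≤ 2)
    (hp : p.IsHamiltonian) : (p.length + 1) / 3 ≤ packNum G := by
  set P := (range ((p.length + 1) / 3)).image fun k ↦ p.getVert (3 * k)
  have hinj := hp.isPath.getVert_injOn
  have hcard : P.card = (p.length + 1) / 3 := by
    rw [card_image_of_injOn, card_range]
    intro k hk l hl e
    simp only [coe_range, Set.mem_Iio] at hk hl
    have := hinj (show 3 * k ≤ p.length by omega) (show 3 * l ≤ p.length by omega) e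
    omega
  have hclosed : ∀ i < p.length, ∀ v ∈ insert (p.getVert i) (G.neighborSet (p.getVert i)),
      ∃ j ≤ p.length, p.getVert j = v ∧
        (j = i ∨ j + 1 = i ∨ j = i + 1 ∨ (i = 0 ∧ j = p.length)) := by
    rintro i hi v (rfl | hv)
    · exact ⟨i, hi.le, rfl, .inl rfl⟩
    · obtain ⟨j, hj, e, hji⟩ := hp.exists_getVert_of_adj hdeg hi hv
      exact ⟨j, hj, e, .inr hji⟩
  have hP : IsPackingSet G P := by
    simp only [IsPackingSet, P, mem_image, mem_range]
    rintro _ ⟨k, hk, rfl⟩ _ ⟨l, hl, rfl⟩ hkl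
    have hkl : k ≠ l := by rintro rfl; exact hkl rfl
    refine Set.disjoint_left.mpr fun v hvk hvl ↦ ?_
    obtain ⟨j, hj, rfl, hjk⟩ := hclosed (3 * k) (by omega) v hvk
    obtain ⟨j', hj', e, hjl⟩ := hclosed (3 * l) (by omega) _ hvl
    have := hinj hj' hj e
    omega
  have hbdd : BddAbove {n | ∃ Y : Finset V, IsPackingSet G Y ∧ Y.card = n} :=
    ⟨Fintype.card V, by rintro _ ⟨Y, -, rfl⟩; exact card_le_univ Y⟩
  exact le_csSup hbdd ⟨P, hP, hcard⟩

end Walk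

end SimpleGraph

theorem domination_le_packing_add_one_of_maxDegree_le_two {V : Type*} [Fintype V] [DecidableEq V]
    (G : SimpleGraph V) [DecidableRel G.Adj] (hconn : G.Connected) (hdeg : G.maxDegree ≤ 2) :
    domNum G ≤ packNum G + 1 := by
  obtain ⟨a, b, p, hp⟩ := hconn.exists_isHamiltonian_of_maxDegree_le_two hdeg
  have := hp.le_packNum hdeg
  calc domNum G ≤ (p.length + 3) / 3 := hp.domNum_le
    _ ≤ packNum G + 1 := by omega
end

section
/- Every maximal outerplanar graph G admits a proper 4-coloring of its vertices such that every 4-cycle of G receives all four colors. -/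
open SimpleGraph Finset

/-- `G` is a maximal outerplanar graph: its vertices can be arranged in a Hamiltonian
cycle (the boundary of the polygon), all chords are pairwise non-crossing, and the number
of edges is `2n - 3` (a full triangulation of the polygon). -/
def IsMaximalOuterplanar {V : Type*} [Fintype V] (G : SimpleGraph V) : Prop :=
  ∃ f : Fin (Fintype.card V) ≃ V,
    (∀ i : Fin (Fintype.card V), G.Adj (f i) (f (finRotate (Fintype.card V) i))) ∧
    (∀ i j k l : Fin (Fintype.card V), G.Adj (f i) (f j) → G.Adj (f k) (f l) →
      ¬ (i < k ∧ k < j ∧ j < l)) ∧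
    G.edgeSet.ncard = 2 * Fintype.card V - 3

/-!
Label the vertices `0, …, n - 1` along the Hamiltonian cycle. If the polygon `a, …, b` is
triangulated, the triangle on its chord `ab` has an apex `t`, every other edge lies in `a, …, t`
or in `t, …, b`, and both halves are again triangulated. Colour recursively: `a` and `b` get
colours `x ≠ y`, the apex `t` gets a colour `z` avoiding `x`, `y` and the colour `w` of the apex
on the far side of `ab`, and we recurse on `a, …, t` (forbidding `y` at its apex) and on
`t, …, b` (forbidding `x`). A 4-cycle not contained in one half must consist of the triangle
`abt` and the triangle on `at` or on `tb`, whose apex was chosen to avoid the colour of `b`,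
resp. `a`. Maximality enters through the edge count only: a polygon `a, …, b` with non-crossing
chords has at most `2(b - a) - 1` edges, so the count `2n - 3` forces every polygon met in the
recursion to be triangulated.
-/

lemma val_finRotate_mk_of_lt {n i : ℕ} (h : i + 1 < n) :
    (finRotate n ⟨i, by omega⟩ : ℕ) = i + 1 := by
  obtain ⟨k, rfl⟩ : ∃ k, n = k + 1 := ⟨n - 1, by omega⟩
  rw [finRotate_of_lt (by omega)]

namespace SimpleGraph

section RainbowColoring

variable {V W α : Type*} {G : SimpleGraph V} {s : Set V} {c c' : V → α}

/-- Together with properness, distinct colours at opposite corners make every 4-cycle in `s`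
rainbow (`IsRainbowC4Coloring.card_eq_four`). -/
structure IsRainbowC4Coloring (G : SimpleGraph V) (s : Set V) (c : V → α) : Prop where
  ne_of_adj : ∀ ⦃u v⦄, u ∈ s → v ∈ s → G.Adj u v → c u ≠ c v
  ne_of_opposite : ∀ ⦃p q r x⦄, p ∈ s → q ∈ s → r ∈ s → x ∈ s →
    G.Adj p q → G.Adj q r → G.Adj r x → G.Adj x p → p ≠ r → q ≠ x → c p ≠ c r

namespace IsRainbowC4Coloring

lemma congr (h : G.IsRainbowC4Coloring s c) (hc : Set.EqOn c c' s) :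
    G.IsRainbowC4Coloring s c' where
  ne_of_adj _ _ hu hv huv := hc hu ▸ hc hv ▸ h.ne_of_adj hu hv huv
  ne_of_opposite _ _ _ _ hp hq hr hx hpq hqr hrx hxp hpr hqx :=
    hc hp ▸ hc hr ▸ h.ne_of_opposite hp hq hr hx hpq hqr hrx hxp hpr hqx

lemma comap {H : SimpleGraph W} {s : Set W} {c : W → α} (h : H.IsRainbowC4Coloring s c)
    (φ : G ↪g H) (hφ : ∀ v, φ v ∈ s) : G.IsRainbowC4Coloring Set.univ (c ∘ φ) where
  ne_of_adj u v _ _ huv := h.ne_of_adj (hφ u) (hφ v) (φ.map_adj_iff.2 huv)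
  ne_of_opposite p q r x _ _ _ _ hpq hqr hrx hxp hpr hqx :=
    h.ne_of_opposite (hφ p) (hφ q) (hφ r) (hφ x) (φ.map_adj_iff.2 hpq) (φ.map_adj_iff.2 hqr)
      (φ.map_adj_iff.2 hrx) (φ.map_adj_iff.2 hxp) (φ.injective.ne hpr) (φ.injective.ne hqx)

lemma card_eq_four [DecidableEq α] (h : G.IsRainbowC4Coloring s c) {p q r x : V}
    (hp : p ∈ s) (hq : q ∈ s) (hr : r ∈ s) (hx : x ∈ s)
    (hpq : G.Adj p q) (hqr : G.Adj q r) (hrx : G.Adj r x) (hxp : G.Adj x p)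
    (hpr : p ≠ r) (hqx : q ≠ x) : ({c p, c q, c r, c x} : Finset α).card = 4 :=
  Finset.card_eq_four.2 ⟨_, _, _, _, h.ne_of_adj hp hq hpq,
    h.ne_of_opposite hp hq hr hx hpq hqr hrx hxp hpr hqx, (h.ne_of_adj hx hp hxp).symm,
    h.ne_of_adj hq hr hqr, h.ne_of_opposite hq hr hx hp hqr hrx hxp hpq hqx hpr.symm,
    h.ne_of_adj hr hx hrx, rfl⟩

end IsRainbowC4Coloring

lemma isRainbowC4Coloring_Icc_succ {H : SimpleGraph ℕ} {c : ℕ → α} {a : ℕ}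
    (hc : c a ≠ c (a + 1)) : H.IsRainbowC4Coloring (Set.Icc a (a + 1)) c where
  ne_of_adj u v hu hv huv := by
    have := huv.ne
    simp only [Set.mem_Icc] at hu hv
    rcases (by omega : u = a ∧ v = a + 1 ∨ u = a + 1 ∧ v = a) with ⟨rfl, rfl⟩ | ⟨rfl, rfl⟩
    exacts [hc, hc.symm]
  ne_of_opposite p q r x hp hq hr _ hpq hqr _ _ hpr _ := by
    have := hpq.ne
    have := hqr.ne
    simp only [Set.mem_Icc] at hp hq hr
    omega

end RainbowColoring

section Labeling

variable {α : Type*} {H : SimpleGraph ℕ} {m a b t : ℕ}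

/-- `0, 1, …, m` are the vertices of `H` in their order along the outer face. -/
structure IsOuterplanarLabeling (H : SimpleGraph ℕ) (m : ℕ) : Prop where
  adj_succ : ∀ i < m, H.Adj i (i + 1)
  not_cross : ∀ ⦃i j k l⦄, H.Adj i j → H.Adj k l → ¬(i < k ∧ k < j ∧ j < l)

open Classical in
noncomputable def edgesIn (H : SimpleGraph ℕ) (a b : ℕ) : Finset (Sym2 ℕ) :=
  (Icc a b).sym2.filter (· ∈ H.edgeSet)

lemma mk_mem_edgesIn {i j : ℕ} :
    s(i, j) ∈ H.edgesIn a b ↔ H.Adj i j ∧ a ≤ i ∧ i ≤ b ∧ a ≤ j ∧ j ≤ b := by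
  simp [edgesIn, and_comm, and_assoc]

/-- By `IsOuterplanarLabeling.card_edgesIn_le` this is the largest possible number of edges,
which is attained exactly by the triangulations of the polygon `a, …, b`. -/
def IsTriangulated (H : SimpleGraph ℕ) (a b : ℕ) : Prop :=
  #(H.edgesIn a b) = 2 * (b - a) - 1

/-- In a triangulation, `t` is the apex of the triangle on the chord `ab`. -/
def SplitsAt (H : SimpleGraph ℕ) (a b t : ℕ) : Prop :=
  a < t ∧ t < b ∧
    ∀ ⦃i j⦄, H.Adj i j → a ≤ i → i < j → j ≤ b → (i = a ∧ j = b) ∨ j ≤ t ∨ t ≤ i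

lemma IsOuterplanarLabeling.exists_splitsAt (hH : H.IsOuterplanarLabeling m)
    (hab : a + 1 < b) (hb : b ≤ m) : ∃ t, H.SplitsAt a b t := by
  classical
  -- the largest neighbour of `a` below `b`: an edge jumping over it would cross the edge `at`
  set t := Nat.findGreatest (H.Adj a) (b - 1)
  have hat : H.Adj a t := Nat.findGreatest_spec (m := a + 1) (by omega) (hH.adj_succ a (by omega))
  have hle : a + 1 ≤ t := Nat.le_findGreatest (by omega) (hH.adj_succ a (by omega))
  have htb : t ≤ b - 1 := Nat.findGreatest_le _
  refine ⟨t, by omega, by omega, fun i j hij hai hlt hjb => ?_⟩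
  by_contra! hcon
  rcases hai.eq_or_lt with rfl | hai
  · exact Nat.findGreatest_is_greatest (n := b - 1) (by omega) (by omega) hij
  · exact hH.not_cross hat hij ⟨hai, by omega, by omega⟩

namespace SplitsAt

lemma eq_of_lt_of_lt (h : H.SplitsAt a b t) {i j : ℕ} (hij : H.Adj i j) (hai : a ≤ i)
    (hjb : j ≤ b) (hit : i < t) (htj : t < j) : i = a ∧ j = b := by
  rcases h.2.2 hij hai (by omega) hjb with h | h | h
  exacts [h, by omega, by omega]

lemma eq_of_adj_of_adj (h : H.SplitsAt a b t) {u : ℕ} (hau : a < u) (hub : u < b)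
    (ha : H.Adj a u) (hb : H.Adj u b) : u = t := by
  obtain ⟨hat, htb, hsplit⟩ := h
  have := hsplit ha le_rfl hau hub.le
  have := hsplit hb hau.le hub le_rfl
  omega

lemma square_through_chord (h : H.SplitsAt a b t) {r s : ℕ} (hr : r ∈ Set.Icc a b)
    (hs : s ∈ Set.Icc a b) (has : H.Adj a s) (hsr : H.Adj s r) (hrb : H.Adj r b)
    (hra : r ≠ a) (hsb : s ≠ b) : (r = t ∧ a < s ∧ s < t) ∨ (s = t ∧ t < r ∧ r < b) := by
  obtain ⟨hat, htb, hsplit⟩ := h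
  obtain ⟨⟨har, hrb'⟩, ⟨has', hsb'⟩⟩ := And.intro hr hs
  have := has.ne
  have := hrb.ne
  have := hsplit has le_rfl (by omega) hsb'
  have := hsplit hrb har (by omega) le_rfl
  rcases lt_or_gt_of_ne hsr.ne with hlt | hlt
  · have := hsplit hsr has' hlt hrb'
    omega
  · have := hsplit hsr.symm har hlt hsb'
    omega

lemma edgesIn_subset (h : H.SplitsAt a b t) :
    H.edgesIn a b ⊆ insert s(a, b) (H.edgesIn a t ∪ H.edgesIn t b) := by
  intro e he
  induction e using Sym2.inductionOn with | hf i j => ?_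
  wlog hij : i < j generalizing i j
  · have hne := (mk_mem_edgesIn.1 he).1.ne
    rw [Sym2.eq_swap (a := i)] at he ⊢
    exact this j i he (by omega)
  obtain ⟨hadj, hai, -, -, hjb⟩ := mk_mem_edgesIn.1 he
  simp only [mem_insert, mem_union, mk_mem_edgesIn, Sym2.eq_iff]
  rcases h.2.2 hadj hai hij hjb with hab | hjt | hti
  · exact Or.inl (Or.inl hab)
  · exact Or.inr (Or.inl ⟨hadj, by omega⟩)
  · exact Or.inr (Or.inr ⟨hadj, by omega⟩)

lemma card_edgesIn_le (h : H.SplitsAt a b t) :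
    #(H.edgesIn a b) ≤ #(H.edgesIn a t) + #(H.edgesIn t b) + 1 :=
  calc #(H.edgesIn a b) ≤ #(insert s(a, b) (H.edgesIn a t ∪ H.edgesIn t b)) :=
        card_le_card h.edgesIn_subset
    _ ≤ #(H.edgesIn a t ∪ H.edgesIn t b) + 1 := card_insert_le _ _
    _ ≤ #(H.edgesIn a t) + #(H.edgesIn t b) + 1 := by gcongr; exact card_union_le _ _

end SplitsAt

lemma edgesIn_succ_subset : H.edgesIn a (a + 1) ⊆ {s(a, a + 1)} := by
  intro e he
  induction e using Sym2.inductionOn with | hf i j => ?_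
  obtain ⟨hadj, h⟩ := mk_mem_edgesIn.1 he
  have := hadj.ne
  rw [mem_singleton, Sym2.eq_iff]
  omega

theorem IsOuterplanarLabeling.card_edgesIn_le (hH : H.IsOuterplanarLabeling m) {a b : ℕ}
    (hab : a < b) (hb : b ≤ m) : #(H.edgesIn a b) ≤ 2 * (b - a) - 1 := by
  rcases (by omega : b = a + 1 ∨ a + 1 < b) with rfl | hab
  · simpa using card_le_card edgesIn_succ_subset
  obtain ⟨t, h⟩ := hH.exists_splitsAt hab hb
  have ⟨hat, htb, _⟩ := h
  have := IsOuterplanarLabeling.card_edgesIn_le hH hat (by omega)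
  have := IsOuterplanarLabeling.card_edgesIn_le hH htb hb
  have := h.card_edgesIn_le
  omega
termination_by b - a
decreasing_by all_goals omega

lemma IsTriangulated.exists_splitsAt (htri : H.IsTriangulated a b)
    (hH : H.IsOuterplanarLabeling m) (hab : a + 1 < b) (hb : b ≤ m) :
    ∃ t, H.SplitsAt a b t ∧ H.IsTriangulated a t ∧ H.IsTriangulated t b := by
  obtain ⟨t, h⟩ := hH.exists_splitsAt hab hb
  have ⟨hat, htb, _⟩ := h
  have := hH.card_edgesIn_le hat (by omega)
  have := hH.card_edgesIn_le htb hb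
  have := h.card_edgesIn_le
  unfold IsTriangulated at htri ⊢
  exact ⟨t, h, by omega, by omega⟩

lemma SplitsAt.isRainbowC4Coloring (h : H.SplitsAt a b t) {c : ℕ → α}
    (hL : H.IsRainbowC4Coloring (Set.Icc a t) c) (hR : H.IsRainbowC4Coloring (Set.Icc t b) c)
    (hab : c a ≠ c b)
    (hchord : ∀ ⦃r s⦄, r ∈ Set.Icc a b → s ∈ Set.Icc a b → H.Adj a s → H.Adj s r →
      H.Adj r b → r ≠ a → s ≠ b → c a ≠ c r ∧ c s ≠ c b) :
    H.IsRainbowC4Coloring (Set.Icc a b) c := by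
  have hne_of_lt : ∀ ⦃u v⦄, u ∈ Set.Icc a b → v ∈ Set.Icc a b → H.Adj u v → u < v →
      c u ≠ c v := by
    rintro u v ⟨hau, hub⟩ ⟨hav, hvb⟩ huv hlt
    rcases h.2.2 huv hau hlt hvb with ⟨rfl, rfl⟩ | hvt | htu
    · exact hab
    · exact hL.ne_of_adj ⟨hau, by omega⟩ ⟨hav, hvt⟩ huv
    · exact hR.ne_of_adj ⟨htu, hub⟩ ⟨by omega, hvb⟩ huv
  -- a 4-cycle with an edge jumping over `t` must use the chord `ab`
  have hne_of_straddle : ∀ ⦃p q r x⦄, p ∈ Set.Icc a b → q ∈ Set.Icc a b → r ∈ Set.Icc a b →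
      x ∈ Set.Icc a b → H.Adj p q → H.Adj q r → H.Adj r x → H.Adj x p → p ≠ r → q ≠ x →
      (p < t ∧ t < q ∨ q < t ∧ t < p) → c p ≠ c r := by
    rintro p q r x hp hq hr hx hpq hqr hrx hxp hpr hqx (⟨hpt, htq⟩ | ⟨hqt, htp⟩)
    · obtain ⟨rfl, rfl⟩ := h.eq_of_lt_of_lt hpq hp.1 hq.2 hpt htq
      exact (hchord hr hx hxp.symm hrx.symm hqr.symm hpr.symm hqx.symm).1
    · obtain ⟨rfl, rfl⟩ := h.eq_of_lt_of_lt hpq.symm hq.1 hp.2 hqt htp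
      exact (hchord hx hr hqr hrx hxp hqx.symm hpr.symm).2.symm
  refine ⟨fun u v hu hv huv => ?_, fun p q r x hp hq hr hx hpq hqr hrx hxp hpr hqx => ?_⟩
  · rcases lt_or_gt_of_ne huv.ne with hlt | hlt
    exacts [hne_of_lt hu hv huv hlt, (hne_of_lt hv hu huv.symm hlt).symm]
  by_cases hleft : p ≤ t ∧ q ≤ t ∧ r ≤ t ∧ x ≤ t
  · exact hL.ne_of_opposite ⟨hp.1, hleft.1⟩ ⟨hq.1, hleft.2.1⟩ ⟨hr.1, hleft.2.2.1⟩
      ⟨hx.1, hleft.2.2.2⟩ hpq hqr hrx hxp hpr hqx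
  by_cases hright : t ≤ p ∧ t ≤ q ∧ t ≤ r ∧ t ≤ x
  · exact hR.ne_of_opposite ⟨hright.1, hp.2⟩ ⟨hright.2.1, hq.2⟩ ⟨hright.2.2.1, hr.2⟩
      ⟨hright.2.2.2, hx.2⟩ hpq hqr hrx hxp hpr hqx
  rcases (by omega : (p < t ∧ t < q ∨ q < t ∧ t < p) ∨ (r < t ∧ t < q ∨ q < t ∧ t < r) ∨
      (r < t ∧ t < x ∨ x < t ∧ t < r) ∨ (p < t ∧ t < x ∨ x < t ∧ t < p)) with h | h | h | h
  · exact hne_of_straddle hp hq hr hx hpq hqr hrx hxp hpr hqx h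
  · exact (hne_of_straddle hr hq hp hx hqr.symm hpq.symm hxp.symm hrx.symm hpr.symm hqx h).symm
  · exact (hne_of_straddle hr hx hp hq hrx hxp hpq hqr hpr.symm hqx.symm h).symm
  · exact hne_of_straddle hp hx hr hq hxp.symm hrx.symm hqr.symm hpq.symm hpr hqx.symm h

theorem IsTriangulated.exists_isRainbowC4Coloring {a b : ℕ} (htri : H.IsTriangulated a b)
    (hH : H.IsOuterplanarLabeling m) (hab : a < b) (hb : b ≤ m) {x y : Fin 4} (w : Fin 4)
    (hxy : x ≠ y) : ∃ c : ℕ → Fin 4, c a = x ∧ c b = y ∧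
      (∀ u, a < u → u < b → H.Adj a u → H.Adj u b → c u ≠ w) ∧
      H.IsRainbowC4Coloring (Set.Icc a b) c := by
  rcases (by omega : b = a + 1 ∨ a + 1 < b) with rfl | hab
  · exact ⟨fun v => if v = a then x else y, by simp, by simp, fun u _ _ => by omega,
      isRainbowC4Coloring_Icc_succ (by simpa using hxy)⟩
  obtain ⟨t, h, hL, hR⟩ := htri.exists_splitsAt hH hab hb
  have ⟨hat, htb, _⟩ := h
  obtain ⟨z, hzx, hzy, hzw⟩ : ∃ z : Fin 4, z ≠ x ∧ z ≠ y ∧ z ≠ w := by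
    revert x y w; decide
  obtain ⟨cL, hcLa, hcLt, hapexL, hcL⟩ :=
    IsTriangulated.exists_isRainbowC4Coloring hL hH hat (by omega) y hzx.symm
  obtain ⟨cR, hcRt, hcRb, hapexR, hcR⟩ :=
    IsTriangulated.exists_isRainbowC4Coloring hR hH htb hb x hzy
  set c : ℕ → Fin 4 := fun v => if v ≤ t then cL v else cR v
  have hcL_eq : Set.EqOn c cL (Set.Icc a t) := fun v hv => if_pos hv.2
  have hcR_eq : Set.EqOn c cR (Set.Icc t b) := fun v hv => by
    rcases hv.1.eq_or_lt with rfl | hlt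
    · simp [c, hcLt, hcRt]
    · simp [c, hlt.not_ge]
  have hca : c a = x := (hcL_eq ⟨le_rfl, hat.le⟩).trans hcLa
  have hcb : c b = y := (hcR_eq ⟨htb.le, le_rfl⟩).trans hcRb
  have hct : c t = z := (hcL_eq ⟨hat.le, le_rfl⟩).trans hcLt
  refine ⟨c, hca, hcb, fun u hau hub hu hu' => ?_, ?_⟩
  · rw [h.eq_of_adj_of_adj hau hub hu hu', hct]
    exact hzw
  refine h.isRainbowC4Coloring (hcL.congr hcL_eq.symm) (hcR.congr hcR_eq.symm)
    (hca ▸ hcb ▸ hxy) fun r s hr hs has hsr hrb hra hsb => ?_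
  rcases h.square_through_chord hr hs has hsr hrb hra hsb with ⟨rfl, has', hst⟩ | ⟨rfl, htr, hrb'⟩
  · rw [hca, hcb, hct, hcL_eq ⟨has'.le, hst.le⟩]
    exact ⟨hzx.symm, hapexL s has' hst has hsr⟩
  · rw [hca, hcb, hct, hcR_eq ⟨htr.le, hrb'.le⟩]
    exact ⟨(hapexR r htr hrb' hsr hrb).symm, hzy⟩
termination_by b - a
decreasing_by all_goals omega

end Labeling

lemma card_edgesIn_map {V : Type*} {G : SimpleGraph V} (φ : V ↪ ℕ) {a b : ℕ}
    (hφ : ∀ v, φ v ∈ Set.Icc a b) : #((G.map φ).edgesIn a b) = G.edgeSet.ncard := by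
  have hcoe : (((G.map φ).edgesIn a b : Finset (Sym2 ℕ)) : Set (Sym2 ℕ)) = (G.map φ).edgeSet := by
    ext e
    induction e using Sym2.inductionOn with | hf i j => ?_
    simp only [mem_coe, mk_mem_edgesIn, mem_edgeSet, and_iff_left_iff_imp, map_adj]
    rintro ⟨u, v, -, rfl, rfl⟩
    exact ⟨(hφ u).1, (hφ u).2, (hφ v).1, (hφ v).2⟩
  rw [← Set.ncard_coe_finset, hcoe, edgeSet_map, Set.ncard_image_of_injective _ φ.sym2Map.injective]

end SimpleGraph

open SimpleGraph in
lemma IsMaximalOuterplanar.exists_labeling {V : Type*} [Fintype V] {G : SimpleGraph V}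
    (hG : IsMaximalOuterplanar G) : ∃ φ : V ↪ ℕ, (∀ v, φ v ≤ Fintype.card V - 1) ∧
      (G.map φ).IsOuterplanarLabeling (Fintype.card V - 1) ∧
      (G.map φ).IsTriangulated 0 (Fintype.card V - 1) := by
  obtain ⟨f, hcycle, hcross, hcard⟩ := hG
  let φ : V ↪ ℕ := f.symm.toEmbedding.trans Fin.valEmbedding
  have hφ : ∀ v, φ v ≤ Fintype.card V - 1 := fun v => by
    have := (f.symm v).isLt
    simp only [φ, Function.Embedding.trans_apply, Fin.valEmbedding_apply]
    omega
  have hφf : ∀ i, φ (f i) = i := fun i => by simp [φ]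
  refine ⟨φ, hφ, ⟨fun i hi => ?_, fun i j k l hij hkl => ?_⟩, ?_⟩
  · have hadj := hcycle ⟨i, by omega⟩
    rw [map_adj]
    refine ⟨_, _, hadj, hφf _, ?_⟩
    rw [hφf, val_finRotate_mk_of_lt (by omega)]
  · rw [map_adj] at hij hkl
    obtain ⟨u, v, huv, rfl, rfl⟩ := hij
    obtain ⟨u', v', huv', rfl, rfl⟩ := hkl
    simpa [φ] using hcross (f.symm u) (f.symm v) (f.symm u') (f.symm v') (by simpa using huv)
      (by simpa using huv')
  · rw [IsTriangulated, card_edgesIn_map φ fun v => ⟨Nat.zero_le _, hφ v⟩, hcard]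
    omega

theorem mop_four_coloring_general {V : Type*} [Fintype V]
    (G : SimpleGraph V) (hmop : IsMaximalOuterplanar G) :
    ∃ c : V → Fin 4, (∀ u v : V, G.Adj u v → c u ≠ c v) ∧
      ∀ a b d e : V, G.Adj a b → G.Adj b d → G.Adj d e → G.Adj e a → a ≠ d → b ≠ e →
        ({c a, c b, c d, c e} : Finset (Fin 4)).card = 4 := by
  rcases le_or_gt (Fintype.card V) 1 with hV | hV
  · have := Fintype.card_le_one_iff_subsingleton.1 hV
    exact ⟨0, fun u v huv => (huv.ne (Subsingleton.elim u v)).elim,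
      fun a b _ _ hab _ _ _ _ _ => (hab.ne (Subsingleton.elim a b)).elim⟩
  obtain ⟨φ, hφ, hH, htri⟩ := hmop.exists_labeling
  obtain ⟨c, -, -, -, hc⟩ := htri.exists_isRainbowC4Coloring hH (by omega) le_rfl 0 zero_ne_one
  have hcG := hc.comap (Embedding.map φ G) fun v => ⟨Nat.zero_le _, hφ v⟩
  exact ⟨c ∘ φ, fun u v huv => hcG.ne_of_adj trivial trivial huv,
    fun a b d e hab hbd hde hea had hbe =>
      hcG.card_eq_four trivial trivial trivial trivial hab hbd hde hea had hbe⟩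

theorem mop_four_coloring {V : Type*} [Fintype V] [DecidableEq V]
    (G : SimpleGraph V) (hmop : IsMaximalOuterplanar G) :
    ∃ c : V → Fin 4, (∀ u v : V, G.Adj u v → c u ≠ c v) ∧
      ∀ a b d e : V, G.Adj a b → G.Adj b d → G.Adj d e → G.Adj e a → a ≠ d → b ≠ e →
        ({c a, c b, c d, c e} : Finset (Fin 4)).card = 4 :=
  mop_four_coloring_general G hmop
end

section
/- The sun graph G (the graph obtained from a triangle a b c by adding three new vertices a', b', c' with a' adjacent to b and c, b' adjacent to a and c, and c' adjacent to a and b) is maximal outerplanar and satisfies γ(G) = 2 and ρ(G) = 1, i.e., γ(G) = 2 ρ(G). -/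
open SimpleGraph Finset

/-- The sun graph: a triangle `a b c` (vertices `0, 1, 2`) together with `a' = 3`
adjacent to `b, c`, `b' = 4` adjacent to `a, c`, and `c' = 5` adjacent to `a, b`. -/
def sunGraph : SimpleGraph (Fin 6) :=
  SimpleGraph.fromRel (fun u v =>
    ((u.val, v.val) : ℕ × ℕ) ∈
      [(0, 1), (1, 2), (0, 2), (3, 1), (3, 2), (4, 0), (4, 2), (5, 0), (5, 1)])

/-! In the cyclic order `a, c', b, a', c, b'` every consecutive pair is an edge and the only
chords are the non-crossing triangle edges `ab, bc, ca`; with `9 = 2·6 - 3` edges the sun graph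
is a triangulated hexagon. No vertex is adjacent to all five others, so `γ = 2`, attained by
`{a, a'}`. The sun graph has diameter `2`, so any two closed neighbourhoods meet and `ρ = 1`. -/

section

variable {V : Type*} {G : SimpleGraph V}

theorem domNum_eq_card {X : Finset V} (hX : IsDominatingSet G X)
    (hmin : ∀ Y : Finset V, IsDominatingSet G Y → X.card ≤ Y.card) : domNum G = X.card :=
  le_antisymm (Nat.sInf_le ⟨X, hX, rfl⟩) (le_csInf ⟨_, X, hX, rfl⟩ fun _ ⟨Y, hY, hcard⟩ ↦
    hcard ▸ hmin Y hY)

theorem packNum_eq_card {Y : Finset V} (hY : IsPackingSet G Y)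
    (hmax : ∀ Z : Finset V, IsPackingSet G Z → Z.card ≤ Y.card) : packNum G = Y.card :=
  le_antisymm (csSup_le ⟨_, Y, hY, rfl⟩ fun _ ⟨Z, hZ, hcard⟩ ↦ hcard ▸ hmax Z hZ)
    (le_csSup ⟨Y.card, fun _ ⟨Z, hZ, hcard⟩ ↦ hcard ▸ hmax Z hZ⟩ ⟨Y, hY, rfl⟩)

theorem IsDominatingSet.two_le_card [Nonempty V]
    (hG : ∀ u : V, ∃ v, v ≠ u ∧ ¬ G.Adj u v) {X : Finset V} (hX : IsDominatingSet G X) :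
    2 ≤ X.card := by
  by_contra! hcard
  obtain hcard | hcard := Nat.le_one_iff_eq_zero_or_eq_one.mp (Nat.le_of_lt_succ hcard)
  · obtain rfl := Finset.card_eq_zero.mp hcard
    simpa using hX (Classical.arbitrary V)
  · obtain ⟨u, rfl⟩ := Finset.card_eq_one.mp hcard
    obtain ⟨v, hvu, hnadj⟩ := hG u
    simpa [hvu, hnadj] using hX v

theorem isPackingSet_singleton (G : SimpleGraph V) (v : V) : IsPackingSet G {v} := by
  simp [IsPackingSet]

theorem IsPackingSet.card_le_one
    (hG : ∀ u v : V, ∃ w, (w = u ∨ G.Adj u w) ∧ (w = v ∨ G.Adj v w)) {Y : Finset V}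
    (hY : IsPackingSet G Y) : Y.card ≤ 1 := by
  refine Finset.card_le_one.mpr fun u hu v hv ↦ ?_
  by_contra huv
  obtain ⟨w, hwu, hwv⟩ := hG u v
  exact Set.disjoint_left.mp (hY u hu v hv huv) (by simpa using hwu) (by simpa using hwv)

end

instance : DecidableRel sunGraph.Adj :=
  fun u v ↦ decidable_of_iff _ (SimpleGraph.fromRel_adj _ u v).symm

def sunHamiltonianOrder : Fin (Fintype.card (Fin 6)) ≃ Fin 6 :=
  ⟨![0, 5, 1, 3, 2, 4], ![0, 2, 4, 3, 5, 1], by unfold Function.LeftInverse; decide,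
    by unfold Function.RightInverse Function.LeftInverse; decide⟩

theorem sunGraph_isMaximalOuterplanar : IsMaximalOuterplanar sunGraph := by
  refine ⟨sunHamiltonianOrder, by decide, by decide, ?_⟩
  rw [← SimpleGraph.coe_edgeFinset, Set.ncard_coe_finset]
  decide

theorem sunGraph_domNum : domNum sunGraph = 2 := by
  have hdom : IsDominatingSet sunGraph {0, 3} := by unfold IsDominatingSet; decide
  refine domNum_eq_card hdom fun Y hY ↦ hY.two_le_card ?_
  decide

theorem sunGraph_packNum : packNum sunGraph = 1 := by
  refine packNum_eq_card (isPackingSet_singleton sunGraph 0) fun Z hZ ↦ hZ.card_le_one ?_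
  decide

theorem sunGraph_domination_packing :
    IsMaximalOuterplanar sunGraph ∧ domNum sunGraph = 2 ∧ packNum sunGraph = 1 ∧
      domNum sunGraph = 2 * packNum sunGraph :=
  ⟨sunGraph_isMaximalOuterplanar, sunGraph_domNum, sunGraph_packNum, by
    rw [sunGraph_domNum, sunGraph_packNum]⟩
end
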